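/- arXiv:0803.3990 — 4 statements merged into one kernel-verified Lean document; each statement's English description precedes it below -/
import Mathlib

section
/- Let p = (p_0,…,p_D) with p_k ≥ 0, ∑_{k=0}^{D} p_k = 1 and ∑_{k=0}^{D} k·p_k = 1, and for each N let n(N) = (n_0(N), …, n_D(N)) be natural numbers with ∑_{k=0}^{D} n_k(N) = N, ∑_{k=0}^{D} k·n_k(N) = N − 1, and n_k(N)/N → p_k for each k. Then the number of plane trees with degree distribution n(N) grows at exponential rate equal to the entropy of p: lim_{N→∞} (1/N) ln #{d ∈ 𝕋_N(D) : χ_k(d) = n_k(N) for all k} = h(p). -/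
open Finset Filter MeasureTheory

/-- The set `M` of probability vectors on `{0,…,D}` with mean `1`. -/
def Mset (D : ℕ) : Set (Fin (D+1) → ℝ) :=
  {p | (∀ k, p k ∈ Set.Icc (0:ℝ) 1) ∧ ∑ k, p k = 1 ∧ ∑ k : Fin (D+1), ((k : ℕ) : ℝ) * p k = 1}

/-- Entropy `h(p) = -∑ p_k ln p_k` (note `Real.log 0 = 0`). -/
noncomputable def entropyFn (D : ℕ) (p : Fin (D+1) → ℝ) : ℝ :=
  -∑ k, p k * Real.log (p k)

/-- Energy `E(p) = ∑ p_k c(k)`. -/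
noncomputable def energyFn (D : ℕ) (c : Fin (D+1) → ℝ) (p : Fin (D+1) → ℝ) : ℝ :=
  ∑ k, p k * c k

/-- Free energy functional `J(p) = β E(p) - h(p)`. -/
noncomputable def Jfun (D : ℕ) (β : ℝ) (c : Fin (D+1) → ℝ) (p : Fin (D+1) → ℝ) : ℝ :=
  β * energyFn D c p - entropyFn D p

/-- Preorder degree sequence of a plane tree on `N` vertices, degrees `≤ D`. -/
def IsTreeSeq (D N : ℕ) (d : Fin N → Fin (D+1)) : Prop :=
  (∑ i, (d i : ℕ)) = N - 1 ∧
    ∀ m : ℕ, 1 ≤ m → m < N →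
      m ≤ ∑ i ∈ Finset.univ.filter (fun i : Fin N => (i : ℕ) < m), (d i : ℕ)

open scoped Classical in
/-- The finite set `𝕋_N(D)` of plane trees (as degree sequences). -/
noncomputable def Trees (D N : ℕ) : Finset (Fin N → Fin (D+1)) :=
  Finset.univ.filter (IsTreeSeq D N)

/-- `χ_k(d)`: the number of vertices of branching degree `k`. -/
def chi (D N : ℕ) (d : Fin N → Fin (D+1)) (k : Fin (D+1)) : ℕ :=
  (Finset.univ.filter (fun i => d i = k)).card

/-- The energy `H(d) = ∑ c(d(i))` of a tree. -/
noncomputable def Hamil (D N : ℕ) (c : Fin (D+1) → ℝ) (d : Fin N → Fin (D+1)) : ℝ :=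
  ∑ i, c (d i)

/-- The partition function `Z_N`. -/
noncomputable def Zpart (D N : ℕ) (β : ℝ) (c : Fin (D+1) → ℝ) : ℝ :=
  ∑ d ∈ Trees D N, Real.exp (-β * Hamil D N c d)

open scoped Classical in
/-- The Gibbs probability `P_N(S)` of an event `S ⊆ 𝕋_N(D)`. -/
noncomputable def Pgibbs (D N : ℕ) (β : ℝ) (c : Fin (D+1) → ℝ)
    (S : Set (Fin N → Fin (D+1))) : ℝ :=
  (∑ d ∈ (Trees D N).filter (fun d => d ∈ S), Real.exp (-β * Hamil D N c d)) /
    Zpart D N β c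

/-- `ν_N`: the law of `(χ_0/N, …, χ_D/N)` under the Gibbs measure `P_N`. -/
noncomputable def nuN (D N : ℕ) (β : ℝ) (c : Fin (D+1) → ℝ) :
    Measure (Fin (D+1) → ℝ) :=
  ∑ d ∈ Trees D N,
    (ENNReal.ofReal (Real.exp (-β * Hamil D N c d) / Zpart D N β c)) •
      Measure.dirac (fun k => (chi D N d k : ℝ) / N)

/-! ### Auxiliary lemmas -/

section Aux

open Finset

variable {α : Type*} [Fintype α] [DecidableEq α]

lemma aux_multinomial_rec (n : α → ℕ) (h : 0 < ∑ k, n k) :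
    Nat.multinomial univ n
      = ∑ k : α, if n k = 0 then 0 else
          Nat.multinomial univ (Function.update n k (n k - 1)) := by
  have hpos : 0 < ∏ k : α, (n k).factorial := by
    apply Finset.prod_pos; intro i _; exact Nat.factorial_pos _
  apply Nat.eq_of_mul_eq_mul_left hpos
  rw [Nat.multinomial_spec, Finset.mul_sum]
  have key : ∀ k : α, (∏ i : α, (n i).factorial) *
      (if n k = 0 then 0 else Nat.multinomial univ (Function.update n k (n k - 1)))
      = n k * (∑ i, n i - 1).factorial := by
    intro k
    by_cases hk : n k = 0
    · simp [hk]
    · rw [if_neg hk]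
      have h1 : ∏ i : α, (n i).factorial
          = n k * ∏ i : α, (Function.update n k (n k - 1) i).factorial := by
        rw [← Finset.mul_prod_erase univ _ (mem_univ k),
            ← Finset.mul_prod_erase univ _ (mem_univ k), ← mul_assoc]
        congr 1
        · rw [Function.update_self, Nat.mul_factorial_pred hk]
        · apply Finset.prod_congr rfl
          intro i hi
          rw [Function.update_of_ne (Finset.ne_of_mem_erase hi)]
      have h2 : ∑ i, Function.update n k (n k - 1) i = ∑ i, n i - 1 := by
        rw [← Finset.add_sum_erase univ _ (mem_univ k),
            ← Finset.add_sum_erase univ n (mem_univ k),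
            Finset.sum_congr rfl (fun i hi => Function.update_of_ne (Finset.ne_of_mem_erase hi) _ _),
            Function.update_self]
        have : 0 < n k := Nat.pos_of_ne_zero hk
        omega
      rw [h1, mul_assoc, Nat.multinomial_spec, h2]
  rw [Finset.sum_congr rfl (fun k _ => key k), ← Finset.sum_mul,
      Nat.mul_factorial_pred h.ne']

lemma aux_sum_update_sub_one (n : α → ℕ) (a : α) (ha : n a ≠ 0) :
    ∑ i, Function.update n a (n a - 1) i = ∑ i, n i - 1 := by
  rw [← Finset.add_sum_erase univ _ (mem_univ a),
      ← Finset.add_sum_erase univ n (mem_univ a),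
      Finset.sum_congr rfl (fun i hi => Function.update_of_ne (Finset.ne_of_mem_erase hi) _ _),
      Function.update_self]
  have : 0 < n a := Nat.pos_of_ne_zero ha
  omega

lemma aux_card_count : ∀ (N : ℕ) (n : α → ℕ), (∑ k, n k = N) →
    ((univ : Finset (Fin N → α)).filter
      (fun d => ∀ k, (univ.filter (fun i => d i = k)).card = n k)).card
      = Nat.multinomial univ n := by
  intro N
  induction N with
  | zero =>
    intro n h
    have hz : ∀ k, n k = 0 := by
      intro k
      exact Nat.eq_zero_of_le_zero (h ▸ Finset.single_le_sum (f := n) (fun i _ => Nat.zero_le _) (mem_univ k))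
    have hm : Nat.multinomial univ n = 1 := by
      have hs := Nat.multinomial_spec (univ : Finset α) n
      simp [hz] at hs
      exact hs
    rw [hm]
    have hfull : ((univ : Finset (Fin 0 → α)).filter
        (fun d => ∀ k, (univ.filter (fun i => d i = k)).card = n k)) = univ := by
      apply Finset.filter_true_of_mem
      intro d _ k
      simp [hz k]
    rw [hfull, Finset.card_univ]
    simp
  | succ N ih =>
    intro n h
    have hcnt : ∀ (a : α) (t : Fin N → α) (k : α),
        ((univ : Finset (Fin (N+1))).filter (fun i => (Fin.cons a t : Fin (N+1) → α) i = k)).card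
          = (if a = k then 1 else 0) + ((univ : Finset (Fin N)).filter (fun i => t i = k)).card := by
      intro a t k
      rw [Finset.card_filter, Finset.card_filter, Fin.sum_univ_succ]
      simp
    have step1 : ((univ : Finset (Fin (N+1) → α)).filter
        (fun d => ∀ k, (univ.filter (fun i => d i = k)).card = n k)).card
        = ∑ a : α, (((univ : Finset (Fin (N+1) → α)).filter
            (fun d => ∀ k, (univ.filter (fun i => d i = k)).card = n k)).filter
              (fun d => d 0 = a)).card :=
      Finset.card_eq_sum_card_fiberwise (fun d _ => mem_univ (d 0))
    rw [step1]
    have step2 : ∀ a : α, (((univ : Finset (Fin (N+1) → α)).filter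
            (fun d => ∀ k, (univ.filter (fun i => d i = k)).card = n k)).filter
              (fun d => d 0 = a)).card
        = ((univ : Finset (Fin N → α)).filter
            (fun t => ∀ k, (univ.filter (fun i => (Fin.cons a t : Fin (N+1) → α) i = k)).card = n k)).card := by
      intro a
      apply Finset.card_nbij' (i := fun d => Fin.tail d) (j := fun t => Fin.cons a t)
      · intro d hd
        simp only [Finset.mem_coe, Finset.mem_filter, Finset.mem_univ, true_and] at hd ⊢
        intro k
        rw [show Fin.cons a (Fin.tail d) = d by rw [← hd.2]; exact Fin.cons_self_tail d]
        exact hd.1 k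
      · intro t ht
        simp only [Finset.mem_coe, Finset.mem_filter, Finset.mem_univ, true_and] at ht ⊢
        exact ⟨ht, rfl⟩
      · intro d hd
        simp only [Finset.mem_coe, Finset.mem_filter] at hd
        rw [← hd.2]; exact Fin.cons_self_tail d
      · intro t ht
        rfl
    rw [Finset.sum_congr rfl (fun a _ => step2 a)]
    clear step1 step2
    have step3 : ∀ a : α, ((univ : Finset (Fin N → α)).filter
            (fun t => ∀ k, (univ.filter (fun i => (Fin.cons a t : Fin (N+1) → α) i = k)).card = n k)).card
        = if n a = 0 then 0 else Nat.multinomial univ (Function.update n a (n a - 1)) := by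
      intro a
      by_cases ha : n a = 0
      · rw [if_pos ha, Finset.card_eq_zero, Finset.filter_eq_empty_iff]
        intro t _ hPt
        have h1 := hPt a
        rw [hcnt, if_pos rfl, ha] at h1
        omega
      · rw [if_neg ha, ← ih (Function.update n a (n a - 1))
            (by rw [aux_sum_update_sub_one n a ha, h]; omega)]
        congr 1
        apply Finset.filter_congr
        intro t _
        constructor
        · intro hPt k
          have hq := hPt k
          rw [hcnt a t k] at hq
          by_cases hk : k = a
          · subst hk
            rw [Function.update_self]
            rw [if_pos rfl] at hq
            omega
          · rw [Function.update_of_ne hk]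
            rw [if_neg (fun hh => hk hh.symm)] at hq
            omega
        · intro hPt k
          rw [hcnt a t k]
          have hq := hPt k
          by_cases hk : k = a
          · subst hk
            rw [Function.update_self] at hq
            rw [if_pos rfl]
            have hx : 0 < n k := Nat.pos_of_ne_zero ha
            omega
          · rw [Function.update_of_ne hk] at hq
            rw [if_neg (fun hh => hk hh.symm)]
            omega
    rw [Finset.sum_congr rfl (fun a _ => step3 a), ← aux_multinomial_rec n (by omega)]

end Aux

section TreeAux

open Finset

lemma aux_cycle_lemma (D N : ℕ) (hN : 0 < N) (d : Fin N → Fin (D+1))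
    (hsum : ∑ i, ((d i : ℕ)) = N - 1) :
    ∃ r : Fin N, IsTreeSeq D N (fun i => d (i + r)) := by
  classical
  haveI : NeZero N := ⟨Nat.pos_iff_ne_zero.mp hN⟩
  set f : ℕ → ℕ := fun i => (d ⟨i % N, Nat.mod_lt i hN⟩ : ℕ) with hf
  set T : ℕ → ℤ := fun m => (∑ i ∈ Finset.range m, (f i : ℤ)) - m with hT
  have hfper : ∀ i, f (i + N) = f i := by
    intro i; simp only [hf, Nat.add_mod_right]
  have hfN : ∑ i ∈ Finset.range N, (f i : ℤ) = (N : ℤ) - 1 := by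
    have h1 : ∑ i ∈ Finset.range N, (f i : ℤ) = ∑ i : Fin N, ((d i : ℕ) : ℤ) := by
      rw [← Fin.sum_univ_eq_sum_range (fun i => (f i : ℤ)) N]
      apply Finset.sum_congr rfl
      intro i _
      have harg : (⟨(i : ℕ) % N, Nat.mod_lt _ hN⟩ : Fin N) = i :=
        Fin.ext (Nat.mod_eq_of_lt i.isLt)
      simp only [hf, harg]
    rw [h1, ← Nat.cast_sum, hsum, Nat.cast_sub hN, Nat.cast_one]
  have hTstep : ∀ m, T (m+1) = T m + (f m : ℤ) - 1 := by
    intro m; simp only [hT, Finset.sum_range_succ]; push_cast; ring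
  have hTper : ∀ m, T (m + N) = T m - 1 := by
    intro m
    induction m with
    | zero =>
      simp only [hT, zero_add, Finset.range_zero, Finset.sum_empty, hfN]
      push_cast; ring
    | succ m ih =>
      have e1 : m + 1 + N = (m + N) + 1 := by ring
      rw [e1, hTstep, ih, hfper, hTstep]; ring
  obtain ⟨r0, hr0mem, hr0min⟩ := Finset.exists_min_image (Finset.range (N+1)) T ⟨0, by simp⟩
  have hQex : ∃ r, ∀ m ∈ Finset.range (N+1), T r ≤ T m := ⟨r0, hr0min⟩
  set r := Nat.find hQex with hr
  have hrQ : ∀ m ∈ Finset.range (N+1), T r ≤ T m := Nat.find_spec hQex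
  have hrle : r ≤ N := by
    have h2 := Nat.find_min' hQex hr0min
    have h3 := Finset.mem_range.mp hr0mem
    omega
  have hstrict : ∀ m, m < r → T r < T m := by
    intro m hm
    have hnot := Nat.find_min hQex hm
    push_neg at hnot
    obtain ⟨m', hm', hlt⟩ := hnot
    exact lt_of_le_of_lt (hrQ m' hm') hlt
  set r₀ : Fin N := ⟨r % N, Nat.mod_lt r hN⟩ with hr₀
  refine ⟨r₀, ?_, ?_⟩
  · calc ∑ i, ((d (i + r₀) : ℕ)) = ∑ i, (d i : ℕ) :=
          Equiv.sum_comp (Equiv.addRight r₀) (fun i => (d i : ℕ))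
    _ = N - 1 := hsum
  · intro m hm1 hmN
    have hpre : ∑ i ∈ Finset.univ.filter (fun i : Fin N => (i : ℕ) < m), ((d (i + r₀) : ℕ) : ℤ)
        = T (r + m) - T r + m := by
      have e1 : ∑ i ∈ Finset.univ.filter (fun i : Fin N => (i : ℕ) < m), ((d (i + r₀) : ℕ) : ℤ)
          = ∑ j ∈ Finset.range m, (f (r + j) : ℤ) := by
        apply Finset.sum_nbij' (i := fun (a : Fin N) => (a : ℕ))
          (j := fun j => (⟨j % N, Nat.mod_lt j hN⟩ : Fin N))
        · intro a ha
          simp only [Finset.mem_filter, Finset.mem_univ, true_and] at ha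
          exact Finset.mem_range.mpr ha
        · intro j hj
          simp only [Finset.mem_filter, Finset.mem_univ, true_and]
          have hj' := Finset.mem_range.mp hj
          have : j % N = j := Nat.mod_eq_of_lt (lt_trans hj' hmN)
          omega
        · intro a _
          exact Fin.ext (Nat.mod_eq_of_lt a.isLt)
        · intro j hj
          have hj' := Finset.mem_range.mp hj
          exact Nat.mod_eq_of_lt (lt_trans hj' hmN)
        · intro a _
          have harg : (⟨(r + (a : ℕ)) % N, Nat.mod_lt _ hN⟩ : Fin N) = a + r₀ := by
            apply Fin.ext
            rw [Fin.val_add]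
            show (r + (a : ℕ)) % N = ((a : ℕ) + r % N) % N
            conv_lhs => rw [Nat.add_comm r (a : ℕ), Nat.add_mod]
            conv_rhs => rw [Nat.add_mod, Nat.mod_mod]
          simp only [hf, harg]
      have e2 := Finset.sum_range_add (fun i => (f i : ℤ)) r m
      rw [e1]
      simp only [hT] at *
      push_cast at e2 ⊢
      linarith [e2]
    have hTr : T r ≤ T (r + m) := by
      by_cases hc : r + m ≤ N
      · exact hrQ (r+m) (Finset.mem_range.mpr (by omega))
      · have hm' : r + m - N < r := by omega
        have e3 : r + m = (r + m - N) + N := by omega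
        rw [e3, hTper]
        have := hstrict (r + m - N) hm'
        omega
    have hfin : (m : ℤ) ≤ ∑ i ∈ Finset.univ.filter (fun i : Fin N => (i : ℕ) < m), ((d (i + r₀) : ℕ) : ℤ) := by
      rw [hpre]; omega
    have := hfin
    push_cast at this
    exact_mod_cast this

lemma aux_sum_val_eq_chi (D N : ℕ) (d : Fin N → Fin (D+1)) :
    ∑ i, (d i : ℕ) = ∑ k : Fin (D+1), (k : ℕ) * chi D N d k := by
  classical
  rw [← Finset.sum_fiberwise_of_maps_to (g := fun i : Fin N => d i)
      (fun i _ => Finset.mem_univ (d i)) (fun i => (d i : ℕ))]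
  apply Finset.sum_congr rfl
  intro k _
  have hconst : ∑ i ∈ Finset.univ.filter (fun i => d i = k), (d i : ℕ)
      = ∑ _i ∈ Finset.univ.filter (fun i => d i = k), (k : ℕ) :=
    Finset.sum_congr rfl (fun i hi => by rw [(Finset.mem_filter.mp hi).2])
  rw [hconst, Finset.sum_const, smul_eq_mul, mul_comm]
  rfl

lemma aux_chi_rot (D N : ℕ) [NeZero N] (d : Fin N → Fin (D+1)) (r : Fin N) (k : Fin (D+1)) :
    chi D N (fun i => d (i + r)) k = chi D N d k := by
  simp only [chi]
  rw [Finset.card_filter, Finset.card_filter]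
  exact Equiv.sum_comp (Equiv.addRight r) (fun i => if d i = k then 1 else 0)

end TreeAux

section CardBounds

open Finset

lemma aux_card_count' (D N : ℕ) (n : Fin (D+1) → ℕ) (h : ∑ k, n k = N) :
    ((univ : Finset (Fin N → Fin (D+1))).filter
      (fun d => ∀ k, (univ.filter (fun i => d i = k)).card = n k)).card
      = Nat.multinomial univ n := by
  rw [← aux_card_count N n h]
  exact congrArg Finset.card (Finset.filter_congr_decidable _ _ _).symm

lemma aux_tree_card_upper (D N : ℕ) (n : Fin (D+1) → ℕ) (h1 : ∑ k, n k = N) :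
    ((Trees D N).filter (fun d => ∀ k, chi D N d k = n k)).card
      ≤ Nat.multinomial univ n := by
  classical
  rw [← aux_card_count N n h1]
  apply Finset.card_le_card
  intro d hd
  simp only [Finset.mem_filter, Trees, Finset.mem_univ, true_and] at hd ⊢
  exact hd.2

lemma aux_tree_card_lower (D N : ℕ) (hN : 0 < N) (n : Fin (D+1) → ℕ)
    (h1 : ∑ k, n k = N) (h2 : ∑ k : Fin (D+1), (k : ℕ) * n k = N - 1) :
    Nat.multinomial univ n
      ≤ N * ((Trees D N).filter (fun d => ∀ k, chi D N d k = n k)).card := by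
  classical
  haveI : NeZero N := ⟨Nat.pos_iff_ne_zero.mp hN⟩
  rw [← aux_card_count' D N n h1]
  set A := ((univ : Finset (Fin N → Fin (D+1))).filter
      (fun d => ∀ k, (univ.filter (fun i => d i = k)).card = n k)) with hA
  set t := ((Trees D N).filter (fun d => ∀ k, chi D N d k = n k)) with ht
  set Φ : (Fin N → Fin (D+1)) → (Fin N → Fin (D+1)) := fun d =>
    if h : (∑ i, (d i : ℕ)) = N - 1 then
      (fun i => d (i + Classical.choose (aux_cycle_lemma D N hN d h))) else d with hΦ
  have hmaps : ∀ d ∈ A, Φ d ∈ t := by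
    intro d hd
    simp only [hA, Finset.mem_filter, Finset.mem_univ, true_and] at hd
    have hchi : ∀ k, chi D N d k = n k := hd
    have hdsum : (∑ i, (d i : ℕ)) = N - 1 := by
      rw [aux_sum_val_eq_chi D N d]
      rw [Finset.sum_congr rfl (fun k _ => by rw [hchi k])]
      exact h2
    have hspec := Classical.choose_spec (aux_cycle_lemma D N hN d hdsum)
    simp only [hΦ, dif_pos hdsum]
    simp only [ht, Trees, Finset.mem_filter, Finset.mem_univ, true_and]
    constructor
    · exact hspec
    · intro k
      rw [aux_chi_rot D N d _ k]
      exact hchi k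
  have hfib : ∀ b ∈ t, (A.filter (fun d => Φ d = b)).card ≤ N := by
    intro b _
    have hsub : A.filter (fun d => Φ d = b)
        ⊆ (univ : Finset (Fin N)).image (fun s : Fin N => fun j => b (j + s)) := by
      intro d hd
      simp only [Finset.mem_filter] at hd
      obtain ⟨hdA, hdb⟩ := hd
      simp only [hA, Finset.mem_filter, Finset.mem_univ, true_and] at hdA
      have hchi2 : ∀ k, chi D N d k = n k := hdA
      have hdsum : (∑ i, (d i : ℕ)) = N - 1 := by
        rw [aux_sum_val_eq_chi D N d]
        rw [Finset.sum_congr rfl (fun k _ => by rw [hchi2 k])]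
        exact h2
      rw [hΦ] at hdb
      simp only [dif_pos hdsum] at hdb
      set r := Classical.choose (aux_cycle_lemma D N hN d hdsum) with hrr
      apply Finset.mem_image.mpr
      refine ⟨-r, Finset.mem_univ _, ?_⟩
      funext j
      have : b (j + -r) = d ((j + -r) + r) := by rw [← hdb]
      rw [this, neg_add_cancel_right]
    calc (A.filter (fun d => Φ d = b)).card
        ≤ ((univ : Finset (Fin N)).image (fun s : Fin N => fun j => b (j + s))).card :=
          Finset.card_le_card hsub
      _ ≤ (univ : Finset (Fin N)).card := Finset.card_image_le
      _ = N := by rw [Finset.card_univ, Fintype.card_fin]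
  have hfin := Finset.card_le_mul_card_image_of_maps_to hmaps N hfib
  rw [hA] at hfin
  exact hfin

end CardBounds

section StirlingAux

lemma aux_log_factorial_bound : ∃ C : ℝ, 0 ≤ C ∧ ∀ n : ℕ, 1 ≤ n →
    |Real.log (n.factorial) - ((n : ℝ) * Real.log n - n)| ≤ C + Real.log (2 * n) := by
  obtain ⟨a, ha, hlow⟩ := Stirling.stirlingSeq'_bounded_by_pos_constant
  set b := Stirling.stirlingSeq 1 with hb
  refine ⟨max |Real.log a| |Real.log b|, le_trans (abs_nonneg _) (le_max_left _ _), ?_⟩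
  intro n hn
  obtain ⟨m, rfl⟩ : ∃ m, n = m + 1 := ⟨n - 1, by omega⟩
  set n := m + 1 with hnn
  have hnpos : (0:ℝ) < n := by positivity
  have hst : a ≤ Stirling.stirlingSeq n := hlow m
  have hstb : Stirling.stirlingSeq n ≤ b := by
    have := Stirling.stirlingSeq'_antitone (Nat.zero_le m)
    simpa only [Function.comp_apply] using this
  have hstpos : 0 < Stirling.stirlingSeq n := lt_of_lt_of_le ha hst
  have hform := Stirling.log_stirlingSeq_formula n
  have hdiv : Real.log ((n : ℝ) / Real.exp 1) = Real.log n - 1 := by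
    rw [Real.log_div (ne_of_gt hnpos) (Real.exp_ne_zero 1), Real.log_exp]
  have key : Real.log (n.factorial) - ((n : ℝ) * Real.log n - n)
      = Real.log (Stirling.stirlingSeq n) + 1 / 2 * Real.log (2 * n) := by
    rw [hform, hdiv]; ring
  rw [key]
  have hlog2n : 0 ≤ Real.log (2 * n) := by
    apply Real.log_nonneg
    have : (1:ℝ) ≤ (n:ℝ) := by exact_mod_cast hn
    linarith
  have habs : |Real.log (Stirling.stirlingSeq n)| ≤ max |Real.log a| |Real.log b| := by
    rw [abs_le]
    constructor
    · have h1 : Real.log a ≤ Real.log (Stirling.stirlingSeq n) := Real.log_le_log ha hst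
      have h2 : -|Real.log a| ≤ Real.log a := neg_abs_le _
      have := le_trans (neg_le_neg (le_max_left |Real.log a| |Real.log b|)) (le_trans h2 h1)
      linarith [le_trans h2 h1, neg_le_neg (le_max_left |Real.log a| |Real.log b|)]
    · have h1 : Real.log (Stirling.stirlingSeq n) ≤ Real.log b := Real.log_le_log hstpos hstb
      exact le_trans h1 (le_trans (le_abs_self _) (le_max_right _ _))
  calc |Real.log (Stirling.stirlingSeq n) + 1 / 2 * Real.log (2 * n)|
      ≤ |Real.log (Stirling.stirlingSeq n)| + |1 / 2 * Real.log (2 * n)| := abs_add_le _ _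
    _ ≤ max |Real.log a| |Real.log b| + Real.log (2 * n) := by
        apply add_le_add habs
        rw [abs_of_nonneg (by linarith)]
        linarith

end StirlingAux

section MainAux

open Finset

lemma aux_log_tendsto : Tendsto (fun N : ℕ => Real.log N / N) atTop (nhds 0) :=
  Real.isLittleO_log_id_atTop.tendsto_div_nhds_zero.comp tendsto_natCast_atTop_atTop

lemma aux_log2_tendsto : Tendsto (fun N : ℕ => Real.log (2 * N) / N) atTop (nhds 0) := by
  have hlogdivR : Tendsto (fun x : ℝ => Real.log x / x) atTop (nhds 0) :=
    Real.isLittleO_log_id_atTop.tendsto_div_nhds_zero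
  have h2x : Tendsto (fun x : ℝ => Real.log (2 * x) / x) atTop (nhds 0) := by
    have hcomp : Tendsto (fun x : ℝ => (2:ℝ) * x) atTop atTop :=
      Tendsto.const_mul_atTop two_pos tendsto_id
    have h1 := hlogdivR.comp hcomp
    have h2 := h1.const_mul (2:ℝ)
    rw [mul_zero] at h2
    apply h2.congr'
    filter_upwards [eventually_gt_atTop (0:ℝ)] with x hx
    show 2 * (Real.log (2 * x) / (2 * x)) = Real.log (2 * x) / x
    field_simp
  exact h2x.comp tendsto_natCast_atTop_atTop

end MainAux

/-- if `n(N)/N → p` along admissible degree distributions, then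
the number of plane trees with degree distribution `n(N)` grows at exponential
rate `h(p)`. -/
theorem stmt8 (D : ℕ) (hD : 2 ≤ D)
    (p : Fin (D+1) → ℝ) (hp0 : ∀ k, 0 ≤ p k)
    (hp1 : ∑ k, p k = 1)
    (hp2 : ∑ k : Fin (D+1), ((k : ℕ) : ℝ) * p k = 1)
    (n : ℕ → Fin (D+1) → ℕ)
    (hn1 : ∀ N, ∑ k, n N k = N)
    (hn2 : ∀ N, ∑ k : Fin (D+1), (k : ℕ) * n N k = N - 1)
    (hconv : ∀ k, Tendsto (fun N : ℕ => (n N k : ℝ) / N) atTop (nhds (p k))) :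
    Tendsto (fun N : ℕ =>
        Real.log
          (((Trees D N).filter (fun d => ∀ k, chi D N d k = n N k)).card : ℝ) / N)
      atTop (nhds (entropyFn D p)) := by
  classical
  obtain ⟨C, hC0, hC⟩ := aux_log_factorial_bound
  obtain ⟨E, hE⟩ : ∃ E : ℕ → ℝ, ∀ m : ℕ,
      E m = Real.log m.factorial - ((m:ℝ) * Real.log m - m) :=
    ⟨fun m => Real.log m.factorial - ((m:ℝ) * Real.log m - m), fun _ => rfl⟩
  obtain ⟨W, hW⟩ : ∃ W : ℕ → ℝ, ∀ N : ℕ,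
      W N = -∑ k, ((n N k : ℝ)/N) * Real.log ((n N k : ℝ)/N) :=
    ⟨fun N => -∑ k, ((n N k : ℝ)/N) * Real.log ((n N k : ℝ)/N), fun _ => rfl⟩
  -- convergence of the empirical entropy
  have hWlim : Tendsto W atTop (nhds (entropyFn D p)) := by
    have h1 : Tendsto (fun N : ℕ => -∑ k, ((n N k : ℝ)/N) * Real.log ((n N k : ℝ)/N))
        atTop (nhds (entropyFn D p)) := by
      rw [entropyFn]
      apply Filter.Tendsto.neg
      apply tendsto_finset_sum
      intro k _
      exact (Real.continuous_mul_log.tendsto (p k)).comp (hconv k)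
    exact h1.congr (fun N => (hW N).symm)
  -- bound on E
  have hEbound : ∀ N m : ℕ, 1 ≤ N → m ≤ N → |E m| ≤ C + Real.log (2*N) := by
    intro N m h1 hmN
    have hN1 : (1:ℝ) ≤ (N:ℝ) := by exact_mod_cast h1
    have hlogN0 : (0:ℝ) ≤ Real.log (2*N) := Real.log_nonneg (by linarith)
    by_cases hm : m = 0
    · subst hm
      have h0 : E 0 = 0 := by rw [hE]; simp
      rw [h0, abs_zero]
      linarith
    · have hb := hC m (Nat.one_le_iff_ne_zero.mpr hm)
      have hmR : (0:ℝ) < m := by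
        have : 0 < m := Nat.pos_of_ne_zero hm
        exact_mod_cast this
      have hmon : Real.log (2*(m:ℝ)) ≤ Real.log (2*(N:ℝ)) := by
        apply Real.log_le_log (by linarith)
        have : (m:ℝ) ≤ N := by exact_mod_cast hmN
        linarith
      rw [hE]
      linarith
  -- log of the multinomial
  have hmlog : ∀ N : ℕ, 0 < N →
      Real.log (Nat.multinomial Finset.univ (n N) : ℝ)
        = Real.log (N.factorial : ℝ) - ∑ k, Real.log (((n N k).factorial : ℕ) : ℝ) := by
    intro N hN
    have hs := Nat.multinomial_spec (Finset.univ : Finset (Fin (D+1))) (n N)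
    rw [hn1 N] at hs
    have hcast : (N.factorial : ℝ)
        = (∏ k, (((n N k).factorial : ℕ) : ℝ)) * (Nat.multinomial Finset.univ (n N) : ℝ) := by
      rw [← Nat.cast_prod, ← Nat.cast_mul, hs]
    have h1 : Real.log (N.factorial : ℝ)
        = (∑ k, Real.log (((n N k).factorial : ℕ) : ℝ))
          + Real.log (Nat.multinomial Finset.univ (n N) : ℝ) := by
      rw [hcast, Real.log_mul ?h1 ?h2, Real.log_prod]
      · intro k _
        exact_mod_cast Nat.factorial_ne_zero (n N k)
      case h1 =>
        apply ne_of_gt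
        apply Finset.prod_pos
        intro k _
        exact_mod_cast Nat.factorial_pos (n N k)
      case h2 =>
        exact_mod_cast Nat.pos_iff_ne_zero.mp (Nat.multinomial_pos _ _)
    linarith
  -- the key identity
  have hkey : ∀ N : ℕ, 1 ≤ N →
      Real.log (Nat.multinomial Finset.univ (n N) : ℝ) / N - W N
        = (E N - ∑ k, E (n N k)) / N := by
    intro N hN
    have hNR : (0:ℝ) < N := by exact_mod_cast hN
    have hsum1R : ∑ k, ((n N k : ℕ) : ℝ) = (N:ℝ) := by
      rw [← Nat.cast_sum, hn1 N]
    have hterm : ∀ k : Fin (D+1), Real.log (((n N k).factorial : ℕ) : ℝ)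
        = E (n N k) + (((n N k : ℕ) : ℝ) * Real.log (((n N k : ℕ) : ℝ)/N)
            + ((n N k : ℕ) : ℝ) * Real.log (N:ℝ) - ((n N k : ℕ) : ℝ)) := by
      intro k
      by_cases h0 : n N k = 0
      · rw [hE, h0]; simp
      · have hpos : (0:ℝ) < ((n N k : ℕ) : ℝ) := by
          exact_mod_cast Nat.pos_of_ne_zero h0
        have hlq : Real.log (((n N k : ℕ) : ℝ)/N)
            = Real.log ((n N k : ℕ) : ℝ) - Real.log (N:ℝ) :=
          Real.log_div (ne_of_gt hpos) (ne_of_gt hNR)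
        rw [hE, hlq]
        ring
    have hA : ∑ k, Real.log (((n N k).factorial : ℕ) : ℝ)
        = (∑ k, E (n N k)) + (∑ k, ((n N k : ℕ) : ℝ) * Real.log (((n N k : ℕ) : ℝ)/N))
          + (N:ℝ) * Real.log (N:ℝ) - (N:ℝ) := by
      rw [Finset.sum_congr rfl (fun k _ => hterm k), Finset.sum_add_distrib,
          Finset.sum_sub_distrib, Finset.sum_add_distrib, ← Finset.sum_mul, hsum1R]
      ring
    have hNfact : Real.log (N.factorial : ℝ) = E N + ((N:ℝ) * Real.log (N:ℝ) - N) := by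
      rw [hE]; ring
    have hWval : W N = -(∑ k, ((n N k : ℕ) : ℝ) * Real.log (((n N k : ℕ) : ℝ)/N)) / N := by
      rw [hW, neg_div, Finset.sum_div]
      congr 1
      apply Finset.sum_congr rfl
      intro k _
      ring
    rw [hmlog N hN, hA, hNfact, hWval]
    field_simp
    ring
  -- convergence of the error term
  have herr : Tendsto (fun N : ℕ =>
      Real.log (Nat.multinomial Finset.univ (n N) : ℝ) / N - W N) atTop (nhds 0) := by
    apply squeeze_zero_norm' (a := fun N : ℕ => ((D:ℝ)+2) * (C + Real.log (2*N)) / N)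
    · filter_upwards [eventually_ge_atTop 1] with N hN
      have hNR : (0:ℝ) < N := by exact_mod_cast hN
      rw [hkey N hN, Real.norm_eq_abs, abs_div, abs_of_pos hNR]
      rw [div_le_div_iff₀ hNR hNR]
      have h1 : |E N| ≤ C + Real.log (2*N) := hEbound N N hN le_rfl
      have h2 : |∑ k, E (n N k)| ≤ ((D:ℝ)+1) * (C + Real.log (2*N)) := by
        calc |∑ k, E (n N k)| ≤ ∑ k, |E (n N k)| := Finset.abs_sum_le_sum_abs _ _
          _ ≤ ∑ _k : Fin (D+1), (C + Real.log (2*N)) := by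
              apply Finset.sum_le_sum
              intro k _
              apply hEbound N (n N k) hN
              have hx := Finset.single_le_sum (f := n N) (fun i _ => Nat.zero_le _) (Finset.mem_univ k)
              have hy := hn1 N
              omega
          _ = ((D:ℝ)+1) * (C + Real.log (2*N)) := by
              rw [Finset.sum_const, Finset.card_univ, Fintype.card_fin, nsmul_eq_mul]
              push_cast
              ring
      have h3 : |E N - ∑ k, E (n N k)| ≤ |E N| + |∑ k, E (n N k)| := abs_sub _ _
      nlinarith [abs_nonneg (E N - ∑ k, E (n N k))]
    · have hC2 : Tendsto (fun N : ℕ => C / N) atTop (nhds 0) :=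
        tendsto_const_div_atTop_nhds_zero_nat C
      have hsum := (hC2.add aux_log2_tendsto).const_mul ((D:ℝ)+2)
      rw [add_zero, mul_zero] at hsum
      apply hsum.congr
      intro N
      ring
  -- convergence of log multinomial / N
  have key1 : Tendsto (fun N : ℕ =>
      Real.log (Nat.multinomial Finset.univ (n N) : ℝ) / N) atTop (nhds (entropyFn D p)) := by
    have h := hWlim.add herr
    rw [add_zero] at h
    apply h.congr
    intro N
    ring
  -- comparison between tree count and multinomial
  have key2 : Tendsto (fun N : ℕ =>
      Real.log (((Trees D N).filter (fun d => ∀ k, chi D N d k = n N k)).card : ℝ) / N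
        - Real.log (Nat.multinomial Finset.univ (n N) : ℝ) / N) atTop (nhds 0) := by
    apply squeeze_zero_norm' (a := fun N : ℕ => Real.log N / N)
    · filter_upwards [eventually_ge_atTop 1] with N hN
      have hNpos : 0 < N := hN
      have hNR : (0:ℝ) < N := by exact_mod_cast hN
      have hub := aux_tree_card_upper D N (n N) (hn1 N)
      have hlb := aux_tree_card_lower D N hNpos (n N) (hn1 N) (hn2 N)
      set t := ((Trees D N).filter (fun d => ∀ k, chi D N d k = n N k)).card with hts
      have hmpos : 0 < Nat.multinomial (Finset.univ : Finset (Fin (D+1))) (n N) :=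
        Nat.multinomial_pos _ _
      have htpos : 0 < t := by
        rcases Nat.eq_zero_or_pos t with h | h
        · rw [h, Nat.mul_zero] at hlb; omega
        · exact h
      have htR : (0:ℝ) < t := by exact_mod_cast htpos
      have hmR : (0:ℝ) < (Nat.multinomial (Finset.univ : Finset (Fin (D+1))) (n N) : ℝ) := by
        exact_mod_cast hmpos
      have hup : Real.log (t : ℝ) ≤ Real.log (Nat.multinomial Finset.univ (n N) : ℝ) :=
        Real.log_le_log htR (by exact_mod_cast hub)
      have hlo : Real.log (Nat.multinomial Finset.univ (n N) : ℝ)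
          ≤ Real.log N + Real.log (t : ℝ) := by
        have h1 : Real.log (Nat.multinomial Finset.univ (n N) : ℝ)
            ≤ Real.log ((N : ℝ) * t) := by
          apply Real.log_le_log hmR
          exact_mod_cast hlb
        rw [Real.log_mul (ne_of_gt hNR) (ne_of_gt htR)] at h1
        exact h1
      have hlogN0 : (0:ℝ) ≤ Real.log N := Real.log_nonneg (by exact_mod_cast hN)
      rw [Real.norm_eq_abs, ← sub_div, abs_div, abs_of_pos hNR]
      apply (div_le_div_iff_of_pos_right hNR).mpr
      rw [abs_le]
      constructor
      · linarith
      · linarith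
    · exact aux_log_tendsto
  have final := key1.add key2
  rw [add_zero] at final
  apply final.congr
  intro N
  ring
end

section
/- Let p* be the unique minimizer of J on M. Then there exist real numbers μ > 0 and ν > 0 such that p*_0 = μ·b₁^{−1}, p*_1 = μ·ν·b₂^{−1}, and p*_m = μ·(b₄ν)^m·b₃^{−1} for every m with 2 ≤ m ≤ D. -/
open Finset Filter MeasureTheory

/-- for the affine energy `c(0)=A₁, c(1)=A₂, c(m)=A₃−A₄m (m≥2)`,
the unique minimizer `p*` of `J` on `M` has the form `p*_0 = μ b₁⁻¹`,
`p*_1 = μν b₂⁻¹`, `p*_m = μ (b₄ν)^m b₃⁻¹` for `2 ≤ m ≤ D`, with `μ, ν > 0`,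
where `bᵢ = e^{βAᵢ}`. -/
theorem stmt10 (D : ℕ) (hD : 2 ≤ D) (β : ℝ) (hβ : 0 < β)
    (A₁ A₂ A₃ A₄ : ℝ) (c : Fin (D+1) → ℝ)
    (hc0 : c 0 = A₁) (hc1 : c 1 = A₂)
    (hcm : ∀ m : Fin (D+1), 2 ≤ (m : ℕ) → c m = A₃ - A₄ * ((m : ℕ) : ℝ))
    (pstar : Fin (D+1) → ℝ) (hpM : pstar ∈ Mset D)
    (hmin : ∀ q ∈ Mset D, Jfun D β c pstar ≤ Jfun D β c q)
    (huniq : ∀ q ∈ Mset D,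
      (∀ r ∈ Mset D, Jfun D β c q ≤ Jfun D β c r) → q = pstar) :
    ∃ μ > (0 : ℝ), ∃ ν > (0 : ℝ),
      pstar 0 = μ * (Real.exp (β * A₁))⁻¹ ∧
      pstar 1 = μ * ν * (Real.exp (β * A₂))⁻¹ ∧
      ∀ m : Fin (D+1), 2 ≤ (m : ℕ) →
        pstar m = μ * (Real.exp (β * A₄) * ν) ^ (m : ℕ) *
          (Real.exp (β * A₃))⁻¹ := by
    classical
  set e : Fin (D+1) → ℝ := fun k => Real.exp (-β * c k) with he
  have hepos : ∀ k, 0 < e k := fun k => Real.exp_pos _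
  set F : ℝ → ℝ := fun y => ∑ k : Fin (D+1), (((k:ℕ):ℝ) - 1) * (e k * y ^ (k:ℕ)) with hF
  have hFcont : Continuous F := by
    apply continuous_finset_sum
    intro k _
    exact continuous_const.mul (continuous_const.mul (continuous_pow _))
  set k2 : Fin (D+1) := ⟨2, by omega⟩ with hk2
  have hk2n : (k2:ℕ) = 2 := rfl
  have hF0 : F 0 = -(e 0) := by
    simp only [hF]
    rw [Finset.sum_eq_single (0 : Fin (D+1))]
    · simp
    · intro b _ hb
      have hbv : (b:ℕ) ≠ 0 := fun h => hb (Fin.ext (by simp [h]))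
      simp [zero_pow hbv]
    · simp
  obtain ⟨Y, hY1, hYe⟩ : ∃ Y : ℝ, 1 ≤ Y ∧ e 0 ≤ e k2 * Y := by
    refine ⟨e 0 / e k2 + 1, ?_, ?_⟩
    · have := le_of_lt (div_pos (hepos 0) (hepos k2))
      linarith
    · have h2 : 0 < e k2 := hepos k2
      rw [mul_add, mul_one, mul_div_cancel₀ _ h2.ne']
      linarith
  have hFY : 0 ≤ F Y := by
    simp only [hF]
    have hsplit := Finset.add_sum_erase Finset.univ
      (fun k : Fin (D+1) => (((k:ℕ):ℝ) - 1) * (e k * Y ^ (k:ℕ))) (mem_univ (0 : Fin (D+1)))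
    have hterm0 : (((((0:Fin (D+1)):ℕ)):ℝ) - 1) * (e 0 * Y ^ (((0:Fin (D+1))):ℕ)) = -(e 0) := by
      simp
    have hk2mem : k2 ∈ Finset.univ.erase (0 : Fin (D+1)) := by
      refine Finset.mem_erase.2 ⟨?_, mem_univ _⟩
      intro h
      have := congrArg Fin.val h
      simp [hk2] at this
    have hsingle : (((k2:ℕ):ℝ) - 1) * (e k2 * Y ^ (k2:ℕ)) ≤
        ∑ k ∈ Finset.univ.erase (0 : Fin (D+1)), (((k:ℕ):ℝ) - 1) * (e k * Y ^ (k:ℕ)) := by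
      apply Finset.single_le_sum (f := fun k : Fin (D+1) => (((k:ℕ):ℝ) - 1) * (e k * Y ^ (k:ℕ)))
        _ hk2mem
      intro i hi
      have hiv : 1 ≤ (i:ℕ) := by
        have h0 : i ≠ 0 := (Finset.mem_erase.1 hi).1
        have : (i:ℕ) ≠ 0 := fun h => h0 (Fin.ext (by simp [h]))
        omega
      have h1 : (0:ℝ) ≤ ((i:ℕ):ℝ) - 1 := by
        have : (1:ℝ) ≤ ((i:ℕ):ℝ) := by exact_mod_cast hiv
        linarith
      have h2 : 0 ≤ e i * Y ^ (i:ℕ) := by positivity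
      exact mul_nonneg h1 h2
    have hYpow : e k2 * Y ≤ e k2 * Y ^ (k2:ℕ) := by
      rw [hk2n]
      have : Y ≤ Y ^ 2 := by nlinarith
      nlinarith [hepos k2]
    rw [← hsplit, hterm0]
    have : e 0 ≤ ∑ k ∈ Finset.univ.erase (0 : Fin (D+1)), (((k:ℕ):ℝ) - 1) * (e k * Y ^ (k:ℕ)) := by
      calc e 0 ≤ e k2 * Y := hYe
        _ ≤ e k2 * Y ^ (k2:ℕ) := hYpow
        _ = (((k2:ℕ):ℝ) - 1) * (e k2 * Y ^ (k2:ℕ)) := by rw [hk2n]; norm_num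
        _ ≤ _ := hsingle
    linarith
  have h0Y : (0:ℝ) ≤ Y := by linarith
  obtain ⟨y, hyIcc, hFy⟩ := intermediate_value_Icc h0Y hFcont.continuousOn
    ⟨by rw [hF0]; linarith [hepos 0], hFY⟩
  have hy0 : 0 < y := by
    rcases lt_or_eq_of_le hyIcc.1 with h | h
    · exact h
    · exfalso; rw [← h] at hFy; rw [hF0] at hFy; linarith [hepos 0]
  simp only [hF] at hFy
  set Z : ℝ := ∑ k : Fin (D+1), e k * y ^ (k:ℕ) with hZ
  have htpos : ∀ k : Fin (D+1), 0 < e k * y ^ (k:ℕ) := fun k => mul_pos (hepos k) (pow_pos hy0 _)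
  have hZpos : 0 < Z := Finset.sum_pos (fun k _ => htpos k) ⟨0, mem_univ _⟩
  have hmean : ∑ k : Fin (D+1), ((k:ℕ):ℝ) * (e k * y ^ (k:ℕ)) = Z := by
    have hexp : ∑ k : Fin (D+1), (((k:ℕ):ℝ) * (e k * y ^ (k:ℕ)) - e k * y ^ (k:ℕ)) = 0 := by
      rw [← hFy]
      exact Finset.sum_congr rfl fun k _ => by ring
    rw [Finset.sum_sub_distrib] at hexp
    rw [hZ]; linarith
  set w : Fin (D+1) → ℝ := fun k => e k * y ^ (k:ℕ) / Z with hw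
  have hwpos : ∀ k, 0 < w k := fun k => div_pos (htpos k) hZpos
  have hwsum : ∑ k, w k = 1 := by
    simp only [hw]
    rw [← Finset.sum_div, ← hZ, div_self hZpos.ne']
  have hwmean : ∑ k : Fin (D+1), ((k:ℕ):ℝ) * w k = 1 := by
    simp only [hw]
    have : ∀ k : Fin (D+1), ((k:ℕ):ℝ) * (e k * y ^ (k:ℕ) / Z)
        = ((k:ℕ):ℝ) * (e k * y ^ (k:ℕ)) / Z := fun k => by ring
    rw [Finset.sum_congr rfl fun k _ => this k, ← Finset.sum_div, hmean, div_self hZpos.ne']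
  have hwM : w ∈ Mset D := by
    refine ⟨fun k => ⟨(hwpos k).le, ?_⟩, hwsum, hwmean⟩
    have hle : e k * y ^ (k:ℕ) ≤ Z :=
      Finset.single_le_sum (f := fun k : Fin (D+1) => e k * y ^ (k:ℕ))
        (fun i _ => (htpos i).le) (mem_univ k)
    exact (div_le_one hZpos).2 hle
  have hlogw : ∀ k : Fin (D+1), Real.log (w k)
      = -β * c k + ((k:ℕ):ℝ) * Real.log y - Real.log Z := by
    intro k
    simp only [hw]
    rw [Real.log_div (htpos k).ne' hZpos.ne', Real.log_mul (hepos k).ne' (pow_pos hy0 _).ne',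
      Real.log_pow, he]
    simp [Real.log_exp]
  have key : ∀ p ∈ Mset D, Jfun D β c p
      = (∑ k, p k * (Real.log (p k) - Real.log (w k))) + (Real.log y - Real.log Z) := by
    intro p hp
    obtain ⟨_, hp1, hp2⟩ := hp
    have h1 : ∑ k, p k * Real.log (w k)
        = -(β * ∑ k, p k * c k) + Real.log y - Real.log Z := by
      calc ∑ k, p k * Real.log (w k)
          = ∑ k, (-(β * (p k * c k)) + (((k:ℕ):ℝ) * p k) * Real.log y
              - p k * Real.log Z) :=
            Finset.sum_congr rfl fun k _ => by rw [hlogw k]; ring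
        _ = -(β * ∑ k, p k * c k) + (∑ k : Fin (D+1), ((k:ℕ):ℝ) * p k) * Real.log y
              - (∑ k, p k) * Real.log Z := by
            simp only [Finset.sum_sub_distrib, Finset.sum_add_distrib, Finset.sum_mul,
              Finset.sum_neg_distrib, ← Finset.mul_sum]
        _ = -(β * ∑ k, p k * c k) + Real.log y - Real.log Z := by rw [hp1, hp2]; ring
    have expand : ∑ k, p k * (Real.log (p k) - Real.log (w k))
        = ∑ k, p k * Real.log (p k) - ∑ k, p k * Real.log (w k) := by
      rw [← Finset.sum_sub_distrib]
      exact Finset.sum_congr rfl fun k _ => by ring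
    simp only [Jfun, energyFn, entropyFn]
    rw [expand, h1]; ring
  have hJw : Jfun D β c w = Real.log y - Real.log Z := by
    rw [key w hwM]
    simp
  have hwmin : ∀ r ∈ Mset D, Jfun D β c w ≤ Jfun D β c r := by
    intro r hr
    rw [hJw, key r hr]
    have hterm : ∀ k : Fin (D+1), r k - w k ≤ r k * (Real.log (r k) - Real.log (w k)) := by
      intro k
      rcases eq_or_lt_of_le (hr.1 k).1 with h | h
      · rw [← h]; simp [(hwpos k).le]
      · have hlog := Real.log_le_sub_one_of_pos (div_pos (hwpos k) h)
        rw [Real.log_div (hwpos k).ne' h.ne'] at hlog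
        have hcancel : w k / r k * r k = w k := div_mul_cancel₀ _ h.ne'
        nlinarith
    have hsum : (0:ℝ) ≤ ∑ k, r k * (Real.log (r k) - Real.log (w k)) := by
      calc (0:ℝ) = ∑ k, (r k - w k) := by
            rw [Finset.sum_sub_distrib, hr.2.1, hwsum]; ring
        _ ≤ _ := Finset.sum_le_sum fun k _ => hterm k
    linarith
  have hwp : w = pstar := huniq w hwM hwmin
  refine ⟨Z⁻¹, inv_pos.2 hZpos, y, hy0, ?_, ?_, ?_⟩
  · rw [← hwp]
    simp only [hw, he, Fin.val_zero, pow_zero, hc0, mul_one, neg_mul, Real.exp_neg]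
    rw [div_eq_mul_inv]; ring
  · have h1v : ((1 : Fin (D+1)) : ℕ) = 1 := by rw [Fin.val_one']; exact Nat.mod_eq_of_lt (by omega)
    rw [← hwp]
    simp only [hw, he, h1v, pow_one, hc1, neg_mul, Real.exp_neg]
    rw [div_eq_mul_inv]; ring
  · intro m hm
    rw [← hwp]
    simp only [hw, he]
    rw [hcm m hm]
    have hem : Real.exp (-β * (A₃ - A₄ * ((m:ℕ):ℝ)))
        = Real.exp (β * A₄) ^ (m:ℕ) * (Real.exp (β * A₃))⁻¹ := by
      rw [← Real.exp_nat_mul, ← Real.exp_neg, ← Real.exp_add]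
      congr 1
      push_cast
      ring
    rw [hem, mul_pow, div_eq_mul_inv]
    ring
end

section
/- Let μ > 0 and ν > 0, and define p ∈ ℝ^{D+1} by p_0 = μ·b₁^{−1}, p_1 = μ·ν·b₂^{−1}, and p_m = μ·(b₄ν)^m·b₃^{−1} for 2 ≤ m ≤ D. If ∑_{k=0}^{D} p_k = 1 and ∑_{k=0}^{D} k·p_k = 1, then p ∈ M and p is the unique minimizer of J on M; that is, J(q) > J(p) for every q ∈ M with q ≠ p. -/
open Finset Filter MeasureTheory

/-- Termwise Gibbs inequality. -/
lemma gibbs_term {x y : ℝ} (hy : 0 < y) (hx : 0 ≤ x) :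
    x - y ≤ x * Real.log x - x * Real.log y ∧
      (x ≠ y → x - y < x * Real.log x - x * Real.log y) := by
  rcases eq_or_lt_of_le hx with h0 | h0
  · constructor
    · simp [← h0]; linarith
    · intro _; simp [← h0]; linarith
  · have hyx : 0 < y / x := div_pos hy h0
    have hle : Real.log (y / x) ≤ y / x - 1 := Real.log_le_sub_one_of_pos hyx
    have hlog : Real.log (y / x) = Real.log y - Real.log x := Real.log_div hy.ne' h0.ne'
    constructor
    · nlinarith [mul_le_mul_of_nonneg_left hle hx, mul_div_cancel₀ y h0.ne']
    · intro hne
      have hne1 : y / x ≠ 1 := by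
        intro h; apply hne; field_simp at h; linarith
      have hlt : Real.log (y / x) < y / x - 1 := Real.log_lt_sub_one_of_pos hyx hne1
      nlinarith [mul_lt_mul_of_pos_left hlt h0, mul_div_cancel₀ y h0.ne']

/-- conversely, if `p` of the geometric form
`p_0 = μ b₁⁻¹, p_1 = μν b₂⁻¹, p_m = μ(b₄ν)^m b₃⁻¹ (2 ≤ m ≤ D)` with
`μ, ν > 0` satisfies the two normalization equations, then `p ∈ M` and `p` is
the unique minimizer of `J` on `M`. -/
theorem stmt11 (D : ℕ) (hD : 2 ≤ D) (β : ℝ) (hβ : 0 < β)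
    (A₁ A₂ A₃ A₄ : ℝ) (c : Fin (D+1) → ℝ)
    (hc0 : c 0 = A₁) (hc1 : c 1 = A₂)
    (hcm : ∀ m : Fin (D+1), 2 ≤ (m : ℕ) → c m = A₃ - A₄ * ((m : ℕ) : ℝ))
    (μ ν : ℝ) (hμ : 0 < μ) (hν : 0 < ν)
    (p : Fin (D+1) → ℝ)
    (hp0 : p 0 = μ * (Real.exp (β * A₁))⁻¹)
    (hp1 : p 1 = μ * ν * (Real.exp (β * A₂))⁻¹)
    (hpm : ∀ m : Fin (D+1), 2 ≤ (m : ℕ) →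
      p m = μ * (Real.exp (β * A₄) * ν) ^ (m : ℕ) * (Real.exp (β * A₃))⁻¹)
    (hsum1 : ∑ k, p k = 1)
    (hsum2 : ∑ k : Fin (D+1), ((k : ℕ) : ℝ) * p k = 1) :
    p ∈ Mset D ∧ ∀ q ∈ Mset D, q ≠ p → Jfun D β c p < Jfun D β c q := by
  have hval1 : ((1 : Fin (D+1)) : ℕ) = 1 := by
    rw [Fin.val_one']; exact Nat.mod_eq_of_lt (by omega)
  -- positivity of p
  have hppos : ∀ k : Fin (D+1), 0 < p k := by
    intro k
    rcases Nat.lt_or_ge (k : ℕ) 2 with hk | hk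
    · interval_cases h : (k : ℕ)
      · have hk0 : k = 0 := by ext; simpa using h
        rw [hk0, hp0]; positivity
      · have hk1 : k = 1 := by ext; rw [hval1]; exact h
        rw [hk1, hp1]; positivity
    · rw [hpm k hk]; positivity
  -- log formula
  have hlog : ∀ k : Fin (D+1),
      Real.log (p k) = Real.log μ + ((k : ℕ) : ℝ) * Real.log ν - β * c k := by
    intro k
    rcases Nat.lt_or_ge (k : ℕ) 2 with hk | hk
    · interval_cases h : (k : ℕ)
      · have hk0 : k = 0 := by ext; simpa using h
        subst hk0
        rw [hp0, Real.log_mul hμ.ne' (by positivity), Real.log_inv, Real.log_exp, hc0]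
        push_cast; ring
      · have hk1 : k = 1 := by ext; rw [hval1]; exact h
        subst hk1
        rw [hp1, Real.log_mul (by positivity) (by positivity),
          Real.log_mul hμ.ne' hν.ne', Real.log_inv, Real.log_exp, hc1]
        push_cast; ring
    · rw [hpm k hk, Real.log_mul (by positivity) (by positivity),
        Real.log_mul hμ.ne' (by positivity), Real.log_pow, Real.log_inv, Real.log_exp,
        Real.log_mul (by positivity) hν.ne', Real.log_exp, hcm k hk]
      ring
  -- J formula for any normalized q
  have hJ : ∀ q : Fin (D+1) → ℝ, ∑ k, q k = 1 →
      (∑ k : Fin (D+1), ((k : ℕ) : ℝ) * q k = 1) →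
      Jfun D β c q = Real.log μ + Real.log ν +
        ∑ k, (q k * Real.log (q k) - q k * Real.log (p k)) := by
    intro q hq1 hq2
    have step : Jfun D β c q = ∑ k, (q k * Real.log μ + ((k : ℕ) : ℝ) * q k * Real.log ν
        + (q k * Real.log (q k) - q k * Real.log (p k))) := by
      simp only [Jfun, energyFn, entropyFn, Finset.mul_sum, sub_neg_eq_add,
        ← Finset.sum_add_distrib]
      refine Finset.sum_congr rfl fun k _ => ?_
      have hc : β * c k = Real.log μ + ((k : ℕ) : ℝ) * Real.log ν - Real.log (p k) := by
        have := hlog k; linarith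
      calc β * (q k * c k) + q k * Real.log (q k)
          = q k * (β * c k) + q k * Real.log (q k) := by ring
        _ = _ := by rw [hc]; ring
    rw [step, Finset.sum_add_distrib, Finset.sum_add_distrib]
    have e1 : ∑ k, q k * Real.log μ = Real.log μ := by
      rw [← Finset.sum_mul, hq1, one_mul]
    have e2 : ∑ k : Fin (D+1), ((k : ℕ) : ℝ) * q k * Real.log ν = Real.log ν := by
      rw [← Finset.sum_mul, hq2, one_mul]
    rw [e1, e2]
  have hpM : p ∈ Mset D := by
    refine ⟨fun k => ⟨(hppos k).le, ?_⟩, hsum1, hsum2⟩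
    calc p k ≤ ∑ j, p j := Finset.single_le_sum (fun j _ => (hppos j).le) (Finset.mem_univ k)
      _ = 1 := hsum1
  refine ⟨hpM, fun q hq hne => ?_⟩
  obtain ⟨hq01, hq1, hq2⟩ := hq
  rw [hJ p hsum1 hsum2, hJ q hq1 hq2]
  have hzero : ∑ k, (p k * Real.log (p k) - p k * Real.log (p k)) = 0 := by simp
  rw [hzero]
  have hdiff : ∑ k, (q k - p k) = (0 : ℝ) := by
    rw [Finset.sum_sub_distrib, hq1, hsum1]; ring
  obtain ⟨k₀, hk₀⟩ := Function.ne_iff.mp hne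
  have hlt : ∑ k, (q k - p k) < ∑ k, (q k * Real.log (q k) - q k * Real.log (p k)) := by
    refine Finset.sum_lt_sum (fun k _ => (gibbs_term (hppos k) (hq01 k).1).1)
      ⟨k₀, Finset.mem_univ k₀, (gibbs_term (hppos k₀) (hq01 k₀).1).2 hk₀⟩
  rw [hdiff] at hlt
  linarith
end

section
/- Let b₁, b₂, b₃, b₄ > 0 and set ν = √b₃ / (b₄·(√b₁ + √b₃)). Then 0 < b₄ν < 1, and there exists μ > 0 such that both normalization equations of the limiting (D → ∞) system hold: μ·(b₁^{−1} + b₂^{−1}·ν + b₃^{−1}·b₄²ν²/(1 − b₄ν)) = 1 and μ·(b₂^{−1}·ν + b₃^{−1}·(2b₄²ν² − b₄³ν³)/(1 − b₄ν)²) = 1. -/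
open Finset Filter MeasureTheory

/-- with `ν = √b₃/(b₄(√b₁+√b₃))` one has `0 < b₄ν < 1` and there
is `μ > 0` solving both normalization equations of the limiting `D → ∞`
system. -/
theorem stmt12 (b₁ b₂ b₃ b₄ : ℝ)
    (h₁ : 0 < b₁) (h₂ : 0 < b₂) (h₃ : 0 < b₃) (h₄ : 0 < b₄)
    (ν : ℝ) (hν : ν = Real.sqrt b₃ / (b₄ * (Real.sqrt b₁ + Real.sqrt b₃))) :
    0 < b₄ * ν ∧ b₄ * ν < 1 ∧
    ∃ μ > (0 : ℝ),
      μ * (b₁⁻¹ + b₂⁻¹ * ν + b₃⁻¹ * (b₄ ^ 2 * ν ^ 2 / (1 - b₄ * ν))) = 1 ∧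
      μ * (b₂⁻¹ * ν +
        b₃⁻¹ * ((2 * b₄ ^ 2 * ν ^ 2 - b₄ ^ 3 * ν ^ 3) / (1 - b₄ * ν) ^ 2)) = 1 := by
  set s1 := Real.sqrt b₁ with hs1def
  set s3 := Real.sqrt b₃ with hs3def
  have hs1 : 0 < s1 := Real.sqrt_pos.mpr h₁
  have hs3 : 0 < s3 := Real.sqrt_pos.mpr h₃
  have hb1 : s1 ^ 2 = b₁ := Real.sq_sqrt h₁.le
  have hb3 : s3 ^ 2 = b₃ := Real.sq_sqrt h₃.le
  have hsum : 0 < s1 + s3 := by linarith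
  have hbν : b₄ * ν = s3 / (s1 + s3) := by
    rw [hν]; field_simp
  have hν0 : 0 < ν := by
    rw [hν]; positivity
  have h1m : 1 - b₄ * ν = s1 / (s1 + s3) := by
    rw [hbν]; field_simp; ring
  have h1m0 : 0 < 1 - b₄ * ν := by rw [h1m]; positivity
  refine ⟨by positivity, by linarith, ?_⟩
  set A := b₁⁻¹ + b₂⁻¹ * ν + b₃⁻¹ * (b₄ ^ 2 * ν ^ 2 / (1 - b₄ * ν)) with hA
  have hA0 : 0 < A := by
    rw [hA]; positivity
  have hAB : A = b₂⁻¹ * ν +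
      b₃⁻¹ * ((2 * b₄ ^ 2 * ν ^ 2 - b₄ ^ 3 * ν ^ 3) / (1 - b₄ * ν) ^ 2) := by
    have hν' : ν = s3 / (b₄ * (s1 + s3)) := hν
    rw [hA, h1m, hν', ← hb1, ← hb3]
    field_simp
    ring
  exact ⟨A⁻¹, inv_pos.mpr hA0, by field_simp, by rw [← hAB]; field_simp⟩
end
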